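/- arXiv:2108.04286 — 3 statements merged into one kernel-verified Lean document; each statement's English description precedes it below -/
import Mathlib

section
/- Let k be an algebraically closed field of characteristic p > 2, let s = sl_2(k), and let d be an element of k. Define the baby Verma module Z(d) to be the p-dimensional k-vector space with basis v_0, ..., v_{p-1} and s-action h·v_i = (d - 2i) v_i, e·v_0 = 0, e·v_i = i(d - i + 1) v_{i-1} for i > 0, f·v_i = v_{i+1} for i < p-1, and f·v_{p-1} = 0. If d does not lie in the prime subfield F_p ∖ {p-1} (i.e., d is not in {0, 1, ..., p-2} viewed in k), then Z(d) is a simple s-module. -/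
/-!
In characteristic `p > 2` the `h`-weights `d - 2i` of `v_0, …, v_{p-1}` are pairwise distinct, so
applying to a nonzero vector of an `h`-stable subspace the Lagrange interpolation polynomial (in `h`)
of one of its weights isolates a basis vector `v_i`. Powers of `f` then reach `v_{p-1}`, and since
`e v_{m+1} = (m+1)(d-m) v_m` with `(m+1)(d-m) ≠ 0` for `d ∉ {0, …, p-2}`, powers of `e` bring back
every `v_j`.
-/

open Polynomial

theorem Submodule.aeval_apply_mem {R M : Type*} [CommSemiring R] [AddCommMonoid M] [Module R M]
    {N : Submodule R M} {f : Module.End R M} (hN : ∀ x ∈ N, f x ∈ N) (q : R[X]) {x : M}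
    (hx : x ∈ N) : aeval f q x ∈ N := by
  induction q using Polynomial.induction_on with
  | C a => simpa [Module.algebraMap_end_apply] using N.smul_mem a hx
  | add q r hq hr => simpa using N.add_mem hq hr
  | monomial n a h =>
    rw [pow_succ', mul_left_comm, map_mul, aeval_X, Module.End.mul_apply]
    exact hN _ h

section Eigenbasis

variable {K M ι : Type*} [Field K] [AddCommGroup M] [Module K M] [Fintype ι] [DecidableEq ι]
  {f : Module.End K M} (v : Module.Basis ι K M) {μ : ι → K}

theorem aeval_lagrangeBasis_apply (hμ : Function.Injective μ) (hf : ∀ i, f (v i) = μ i • v i)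
    (i : ι) (x : M) : aeval f (Lagrange.basis Finset.univ μ i) x = v.repr x i • v i := by
  conv_lhs => rw [← v.sum_repr x]
  simp only [map_sum, map_smul, Module.End.aeval_apply_of_mem_apply_eq_smul (hf _), smul_smul]
  rw [Fintype.sum_eq_single i fun j hj => by
    rw [Lagrange.eval_basis_of_ne hj.symm (Finset.mem_univ j), mul_zero, zero_smul]]
  rw [Lagrange.eval_basis_self hμ.injOn (Finset.mem_univ i), mul_one]

theorem exists_basis_mem_of_forall_apply_mem (hμ : Function.Injective μ)
    (hf : ∀ i, f (v i) = μ i • v i) {N : Submodule K M} (hN : ∀ x ∈ N, f x ∈ N) (hN₀ : N ≠ ⊥) :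
    ∃ i, v i ∈ N := by
  obtain ⟨x, hx, hx₀⟩ := N.ne_bot_iff.mp hN₀
  obtain ⟨i, hi⟩ : ∃ i, v.repr x i ≠ 0 := by
    by_contra! h
    exact hx₀ (v.ext_elem_iff.mpr (by simpa using h))
  refine ⟨i, (N.smul_mem_iff hi).mp ?_⟩
  rw [← aeval_lagrangeBasis_apply v hμ hf]
  exact N.aeval_apply_mem hN _ hx

end Eigenbasis

theorem mem_of_le_of_raising {R M : Type*} [Semiring R] [AddCommMonoid M] [Module R M] {n : ℕ}
    {N : Submodule R M} (v : Fin n → M) {F : Module.End R M}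
    (hF : ∀ m (h : m + 1 < n), F (v ⟨m, by omega⟩) = v ⟨m + 1, h⟩) (hN : ∀ x ∈ N, F x ∈ N)
    {i j : Fin n} (hij : i ≤ j) (hi : v i ∈ N) : v j ∈ N := by
  have key : ∀ m, (i : ℕ) ≤ m → ∀ hm : m < n, v ⟨m, hm⟩ ∈ N := by
    intro m him
    induction m, him using Nat.le_induction with
    | base => exact fun _ => hi
    | succ m _ ih => exact fun hm => hF m hm ▸ hN _ (ih (by omega))
  exact key j hij j.isLt

theorem mem_of_le_of_lowering {K M : Type*} [Field K] [AddCommGroup M] [Module K M] {n : ℕ}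
    {N : Submodule K M} (v : Fin n → M) {E : Module.End K M} {c : ℕ → K}
    (hc : ∀ m, m + 1 < n → c m ≠ 0)
    (hE : ∀ m (h : m + 1 < n), E (v ⟨m + 1, h⟩) = c m • v ⟨m, by omega⟩) (hN : ∀ x ∈ N, E x ∈ N)
    {i j : Fin n} (hij : i ≤ j) (hj : v j ∈ N) : v i ∈ N := by
  have key : ∀ m (hmj : m ≤ (j : ℕ)), v ⟨m, by omega⟩ ∈ N := by
    intro m hmj
    induction hmj using Nat.decreasingInduction with
    | self => exact hj
    | of_succ m hm ih =>
      have hmn : m + 1 < n := by omega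
      exact (N.smul_mem_iff (hc m hmn)).mp (hE m hmn ▸ hN _ ih)
  exact key i hij

theorem natCast_ne_zero_of_lt {R : Type*} [AddGroupWithOne R] {p : ℕ} [CharP R p] {a : ℕ}
    (ha : a ≠ 0) (hap : a < p) : (a : R) ≠ 0 := fun h =>
  ha (CharP.natCast_injOn_Iio R p hap (by omega : 0 < p) (by simpa using h))

theorem injective_sub_two_mul_natCast {K : Type*} [Field K] {p : ℕ} [CharP K p] (hp : 2 < p)
    (d : K) : Function.Injective fun i : Fin p => d - 2 * ((i : ℕ) : K) := by
  intro i j hij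
  have h2 : (2 : K) ≠ 0 := by exact_mod_cast natCast_ne_zero_of_lt (R := K) two_ne_zero hp
  exact Fin.ext (CharP.natCast_injOn_Iio K p i.isLt j.isLt
    (mul_left_cancel₀ h2 (sub_right_injective hij)))

theorem babyVerma_simple_of_not_restrictedWeight_general
    (k : Type*) [Field k] (p : ℕ) (hp2 : 2 < p)
    [CharP k p] (d : k) (hd : ∀ j : ℕ, j ≤ p - 2 → d ≠ (j : k))
    (M : Type*) [AddCommGroup M] [Module k M]
    (E H F : Module.End k M)
    (v : Module.Basis (Fin p) k M)
    (hH : ∀ i : Fin p, H (v i) = (d - 2 * ((i : ℕ) : k)) • v i)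
    (hE : ∀ i : Fin p,
      E (v i) = (((i : ℕ) : k) * (d - ((i : ℕ) : k) + 1)) •
        v ⟨(i : ℕ) - 1, Nat.lt_of_le_of_lt (Nat.sub_le _ _) i.isLt⟩)
    (hF : ∀ i : Fin p,
      F (v i) = if h : (i : ℕ) + 1 < p then v ⟨(i : ℕ) + 1, h⟩ else 0) :
    ∀ N : Submodule k M,
      (∀ x ∈ N, E x ∈ N) → (∀ x ∈ N, H x ∈ N) → (∀ x ∈ N, F x ∈ N) →
      N = ⊥ ∨ N = ⊤ := by
  intro N hNE hNH hNF
  refine or_iff_not_imp_left.mpr fun hN₀ => ?_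
  obtain ⟨i, hi⟩ :=
    exists_basis_mem_of_forall_apply_mem v (injective_sub_two_mul_natCast hp2 d) hH hNH hN₀
  let top : Fin p := ⟨p - 1, by omega⟩
  have htop : v top ∈ N :=
    mem_of_le_of_raising v (fun m h => by simpa [h] using hF ⟨m, by omega⟩) hNF
      (Fin.le_iff_val_le_val.mpr (by omega : (i : ℕ) ≤ p - 1)) hi
  have hc : ∀ m : ℕ, m + 1 < p → ((m : k) + 1) * (d - ((m : k) + 1) + 1) ≠ 0 := by
    intro m hm
    refine mul_ne_zero (by exact_mod_cast natCast_ne_zero_of_lt m.succ_ne_zero hm) fun h => ?_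
    exact hd m (by omega) (by linear_combination h)
  have hall : ∀ j, v j ∈ N := fun j =>
    mem_of_le_of_lowering v hc (fun m h => by simpa using hE ⟨m + 1, h⟩) hNE
      (Fin.le_iff_val_le_val.mpr (by omega : (j : ℕ) ≤ p - 1)) htop
  rw [eq_top_iff, ← v.span_eq, Submodule.span_le]
  exact Set.range_subset_iff.mpr hall

/-- Let `k` be an algebraically closed field of characteristic `p > 2`,
`s = sl₂(k)`, and `d ∈ k`.  The baby Verma module `Z(d)` is the `p`-dimensional
`s`-module with basis `v_0, ..., v_{p-1}` and action
`h·v_i = (d - 2i) v_i`, `e·v_i = i(d - i + 1) v_{i-1}` (so `e·v_0 = 0`),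
`f·v_i = v_{i+1}` for `i < p-1` and `f·v_{p-1} = 0`.
If `d ∉ {0, 1, ..., p-2}` viewed in `k`, then `Z(d)` is a simple `s`-module.

A representation of `sl₂(k)` is formalized as a triple of endomorphisms `E, H, F`
satisfying the commutator relations; a submodule is a subspace stable under all three. -/
theorem babyVerma_simple_of_not_restrictedWeight
    (k : Type*) [Field k] [IsAlgClosed k] (p : ℕ) (hp : p.Prime) (hp2 : 2 < p)
    [CharP k p] (d : k) (hd : ∀ j : ℕ, j ≤ p - 2 → d ≠ (j : k))
    (M : Type*) [AddCommGroup M] [Module k M]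
    (E H F : Module.End k M)
    (hHE : ⁅H, E⁆ = (2 : k) • E) (hHF : ⁅H, F⁆ = (-2 : k) • F) (hEF : ⁅E, F⁆ = H)
    (v : Module.Basis (Fin p) k M)
    (hH : ∀ i : Fin p, H (v i) = (d - 2 * ((i : ℕ) : k)) • v i)
    (hE : ∀ i : Fin p,
      E (v i) = (((i : ℕ) : k) * (d - ((i : ℕ) : k) + 1)) •
        v ⟨(i : ℕ) - 1, Nat.lt_of_le_of_lt (Nat.sub_le _ _) i.isLt⟩)
    (hF : ∀ i : Fin p,
      F (v i) = if h : (i : ℕ) + 1 < p then v ⟨(i : ℕ) + 1, h⟩ else 0) :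
    ∀ N : Submodule k M,
      (∀ x ∈ N, E x ∈ N) → (∀ x ∈ N, H x ∈ N) → (∀ x ∈ N, F x ∈ N) →
      N = ⊥ ∨ N = ⊤ :=
  babyVerma_simple_of_not_restrictedWeight_general k p hp2 d hd M E H F v hH hE hF
end

section
/- Let k be an algebraically closed field of characteristic p > 2, let c, d ∈ {0, 1, ..., p-2} with d ∉ {c, p-c-2}, and let V(c), V(d) be the simple sl_2(k)-modules of highest weights c and d. Then Ext^1_{sl_2(k)}(V(c), V(d)) = 0; that is, every short exact sequence of sl_2(k)-modules 0 → V(d) → M → V(c) → 0 splits. -/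
/-!
The Casimir element `C = 2EF + 2FE + H²` commutes with `E`, `H`, `F`, and on the standard basis
of `V(n)` it acts by the scalar `n(n + 2)`. Hence `C` acts on `V(d) ⊆ M` by `d(d + 2)` and on
`M / V(d) ≅ V(c)` by `c(c + 2)`. For `c, d ≤ p - 2` with `d ∉ {c, p - c - 2}` these scalars
differ in `k`, since `d(d + 2) - c(c + 2) = (d - c)(d + c + 2)`. Then `C - d(d + 2)` kills `V(d)`
and maps `M` into the `c(c + 2)`-eigenspace of `C`, which is therefore an `sl₂`-stable complement
of `V(d)`.
-/

section Casimir

variable {A : Type*} [Ring A]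

/-- Twice the usual Casimir element `EF + FE + H²/2`, which avoids dividing by `2`. -/
def casimir (E H F : A) : A := 2 • (E * F) + 2 • (F * E) + H * H

variable {E H F : A}

theorem commute_casimir_E (hHE : ⁅H, E⁆ = 2 • E) (hEF : ⁅E, F⁆ = H) :
    Commute (casimir E H F) E := by
  have h : ⁅casimir E H F, E⁆ = H * ⁅H, E⁆ + ⁅H, E⁆ * H - 2 • (E * ⁅E, F⁆ + ⁅E, F⁆ * E) := by
    simp only [casimir, Ring.lie_def]; noncomm_ring
  rw [commute_iff_lie_eq, h, hHE, hEF]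
  noncomm_ring

theorem commute_casimir_F (hHF : ⁅H, F⁆ = -(2 • F)) (hEF : ⁅E, F⁆ = H) :
    Commute (casimir E H F) F := by
  have h : ⁅casimir E H F, F⁆ = H * ⁅H, F⁆ + ⁅H, F⁆ * H + 2 • (F * ⁅E, F⁆ + ⁅E, F⁆ * F) := by
    simp only [casimir, Ring.lie_def]; noncomm_ring
  rw [commute_iff_lie_eq, h, hHF, hEF]
  noncomm_ring

theorem commute_casimir_H (hHE : ⁅H, E⁆ = 2 • E) (hHF : ⁅H, F⁆ = -(2 • F)) :
    Commute (casimir E H F) H := by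
  have h : ⁅casimir E H F, H⁆ = -2 • (⁅H, E⁆ * F + E * ⁅H, F⁆ + ⁅H, F⁆ * E + F * ⁅H, E⁆) := by
    simp only [casimir, Ring.lie_def]; noncomm_ring
  rw [commute_iff_lie_eq, h, hHE, hHF]
  noncomm_ring

end Casimir

/-- `w j` plays the role of `F^j v₀` for a highest weight vector `v₀` of weight `n`. -/
structure IsSl2StandardFamily {k V : Type*} [CommRing k] [AddCommGroup V] [Module k V]
    (n : ℕ) (E H F : Module.End k V) (w : Fin (n + 1) → V) : Prop where
  H_apply : ∀ j : Fin (n + 1), H (w j) = ((n : k) - 2 * ((j : ℕ) : k)) • w j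
  E_apply : ∀ j : Fin (n + 1),
    E (w j) = (((j : ℕ) : k) * ((n : k) - ((j : ℕ) : k) + 1)) •
      w ⟨(j : ℕ) - 1, Nat.lt_of_le_of_lt (Nat.sub_le _ _) j.isLt⟩
  F_apply : ∀ j : Fin (n + 1),
    F (w j) = if h : (j : ℕ) + 1 < n + 1 then w ⟨(j : ℕ) + 1, h⟩ else 0

namespace IsSl2StandardFamily

variable {k V : Type*} [CommRing k] [AddCommGroup V] [Module k V] {n : ℕ}
  {E H F : Module.End k V} {w : Fin (n + 1) → V}

theorem E_F_apply (hw : IsSl2StandardFamily n E H F w) (j : Fin (n + 1)) :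
    E (F (w j)) = ((((j : ℕ) : k) + 1) * ((n : k) - (j : ℕ))) • w j := by
  rw [hw.F_apply]
  split_ifs with hj
  · rw [hw.E_apply]
    simp only [Nat.add_sub_cancel, Fin.eta]
    congr 1
    push_cast
    ring
  · have hjn : ((j : ℕ) : k) = n := congrArg Nat.cast (by omega)
    simp [hjn]

theorem F_E_apply (hw : IsSl2StandardFamily n E H F w) (j : Fin (n + 1)) :
    F (E (w j)) = (((j : ℕ) : k) * ((n : k) - (j : ℕ) + 1)) • w j := by
  rw [hw.E_apply, map_smul, hw.F_apply]
  rcases Nat.eq_zero_or_pos (j : ℕ) with hj | hj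
  · simp [hj]
  · rw [dif_pos (show (j : ℕ) - 1 + 1 < n + 1 by omega)]
    congr 2
    ext
    exact Nat.sub_add_cancel hj

theorem casimir_apply (hw : IsSl2StandardFamily n E H F w) (j : Fin (n + 1)) :
    casimir E H F (w j) = ((n : k) * (n + 2)) • w j := by
  simp only [casimir, LinearMap.add_apply, LinearMap.smul_apply, Module.End.mul_apply,
    hw.E_F_apply, hw.F_E_apply, hw.H_apply, map_smul, smul_smul, ← ofNat_smul_eq_nsmul (R := k),
    ← add_smul]
  congr 1
  ring

theorem span_le_eigenspace (hw : IsSl2StandardFamily n E H F w) :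
    Submodule.span k (Set.range w) ≤ (casimir E H F).eigenspace ((n : k) * (n + 2)) := by
  rw [Submodule.span_le]
  rintro _ ⟨j, rfl⟩
  exact Module.End.mem_eigenspace_iff.mpr (hw.casimir_apply j)

theorem casimir_eq_smul_one {u : Module.Basis (Fin (n + 1)) k V}
    (hu : IsSl2StandardFamily n E H F u) : casimir E H F = ((n : k) * (n + 2)) • 1 :=
  u.ext fun j => by simpa using hu.casimir_apply j

end IsSl2StandardFamily

theorem Submodule.casimir_mapQ_mkQ {k M : Type*} [CommRing k] [AddCommGroup M] [Module k M]
    {E H F : Module.End k M} (N : Submodule k M) (hE : N ≤ N.comap E) (hH : N ≤ N.comap H)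
    (hF : N ≤ N.comap F) (x : M) :
    casimir (N.mapQ N E hE) (N.mapQ N H hH) (N.mapQ N F hF) (N.mkQ x) =
      N.mkQ (casimir E H F x) := by
  simp [casimir]

theorem natCast_mul_add_two_ne {k : Type*} [CommRing k] [IsDomain k] {p : ℕ} [CharP k p]
    {c d : ℕ} (hc : c ≤ p - 2) (hd : d ≤ p - 2) (hdc : d ≠ c) (hdc' : d ≠ p - c - 2) :
    (d : k) * (d + 2) ≠ c * (c + 2) := by
  intro h
  have hfactor : ((d : k) - c) * ((d + c + 2 : ℕ) : k) = 0 := by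
    push_cast; linear_combination h
  rcases mul_eq_zero.mp hfactor with hsub | hsum
  · exact hdc (CharP.natCast_injOn_Iio k p (by simp; omega) (by simp; omega) (sub_eq_zero.mp hsub))
  · have hdvd := (CharP.cast_eq_zero_iff k p _).mp hsum
    have := Nat.eq_of_dvd_of_lt_two_mul (by omega) hdvd (by omega)
    omega

theorem Module.End.isCompl_eigenspace_of_le_eigenspace {K V : Type*} [Field K] [AddCommGroup V]
    [Module K V] {C : Module.End K V} {a b : K} (hab : a ≠ b) {N : Submodule K V}
    (hN : N ≤ C.eigenspace a) (hQ : ∀ x, C x - b • x ∈ N) : IsCompl N (C.eigenspace b) := by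
  refine ⟨(C.disjoint_genEigenspace hab 1 1).mono_left hN, ?_⟩
  rw [codisjoint_iff, eq_top_iff]
  intro x _
  -- `(C - b)(C - a) x = (C - a)(C - b) x`, and `C - a` kills `(C - b) x ∈ N`.
  have hmem : C x - a • x ∈ C.eigenspace b := by
    have := Module.End.mem_eigenspace_iff.mp (hN (hQ x))
    rw [Module.End.mem_eigenspace_iff, map_sub, map_smul]
    rw [map_sub, map_smul] at this
    linear_combination (norm := module) this
  have hx : x = (a - b)⁻¹ • (C x - b • x) - (a - b)⁻¹ • (C x - a • x) := by
    rw [← smul_sub, sub_sub_sub_cancel_left, ← sub_smul, smul_smul,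
      inv_mul_cancel₀ (sub_ne_zero.mpr hab), one_smul]
  rw [hx]
  exact Submodule.sub_mem_sup (N.smul_mem _ (hQ x)) (Submodule.smul_mem _ _ hmem)

theorem ext_vanishing_splits_general
    (k : Type*) [Field k] (p : ℕ)
    [CharP k p]
    (c d : ℕ) (hc : c ≤ p - 2) (hd : d ≤ p - 2) (hdc : d ≠ c)
    (hdc' : d ≠ p - c - 2)
    (M : Type*) [AddCommGroup M] [Module k M]
    (E H F : Module.End k M)
    (hHE : ⁅H, E⁆ = (2 : k) • E) (hHF : ⁅H, F⁆ = (-2 : k) • F) (hEF : ⁅E, F⁆ = H)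
    (N : Submodule k M)
    (hNE : N ≤ N.comap E) (hNH : N ≤ N.comap H) (hNF : N ≤ N.comap F)
    -- `N ≅ V(d)`:
    (w : Fin (d + 1) → M)
    (hwspan : Submodule.span k (Set.range w) = N)
    (hwH : ∀ j : Fin (d + 1), H (w j) = ((d : k) - 2 * ((j : ℕ) : k)) • w j)
    (hwE : ∀ j : Fin (d + 1),
      E (w j) = (((j : ℕ) : k) * ((d : k) - ((j : ℕ) : k) + 1)) •
        w ⟨(j : ℕ) - 1, Nat.lt_of_le_of_lt (Nat.sub_le _ _) j.isLt⟩)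
    (hwF : ∀ j : Fin (d + 1),
      F (w j) = if h : (j : ℕ) + 1 < d + 1 then w ⟨(j : ℕ) + 1, h⟩ else 0)
    -- `M / N ≅ V(c)`:
    (u : Module.Basis (Fin (c + 1)) k (M ⧸ N))
    (huH : ∀ j : Fin (c + 1),
      Submodule.mapQ N N H hNH (u j) = ((c : k) - 2 * ((j : ℕ) : k)) • u j)
    (huE : ∀ j : Fin (c + 1),
      Submodule.mapQ N N E hNE (u j) =
        (((j : ℕ) : k) * ((c : k) - ((j : ℕ) : k) + 1)) •
          u ⟨(j : ℕ) - 1, Nat.lt_of_le_of_lt (Nat.sub_le _ _) j.isLt⟩)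
    (huF : ∀ j : Fin (c + 1),
      Submodule.mapQ N N F hNF (u j) =
        if h : (j : ℕ) + 1 < c + 1 then u ⟨(j : ℕ) + 1, h⟩ else 0) :
    ∃ N' : Submodule k M,
      (∀ x ∈ N', E x ∈ N') ∧ (∀ x ∈ N', H x ∈ N') ∧ (∀ x ∈ N', F x ∈ N') ∧
      IsCompl N N' := by
  have hE : ⁅H, E⁆ = 2 • E := by rw [hHE, ofNat_smul_eq_nsmul]
  have hF : ⁅H, F⁆ = -(2 • F) := by rw [hHF, neg_smul, ofNat_smul_eq_nsmul]
  have hNC : N ≤ (casimir E H F).eigenspace ((d : k) * (d + 2)) :=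
    hwspan ▸ IsSl2StandardFamily.span_le_eigenspace ⟨hwH, hwE, hwF⟩
  have hQC : ∀ x, casimir E H F x - ((c : k) * (c + 2)) • x ∈ N := by
    intro x
    have hCbar := congrArg (· (N.mkQ x))
      (IsSl2StandardFamily.casimir_eq_smul_one (u := u) ⟨huH, huE, huF⟩)
    simp only [Submodule.casimir_mapQ_mkQ] at hCbar
    rw [← Submodule.Quotient.mk_eq_zero, Submodule.Quotient.mk_sub, Submodule.Quotient.mk_smul]
    simpa [sub_eq_zero] using hCbar
  exact ⟨(casimir E H F).eigenspace ((c : k) * (c + 2)),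
    fun _ hx => Module.End.mapsTo_genEigenspace_of_comm (commute_casimir_E hE hEF) _ 1 hx,
    fun _ hx => Module.End.mapsTo_genEigenspace_of_comm (commute_casimir_H hE hF) _ 1 hx,
    fun _ hx => Module.End.mapsTo_genEigenspace_of_comm (commute_casimir_F hF hEF) _ 1 hx,
    Module.End.isCompl_eigenspace_of_le_eigenspace (natCast_mul_add_two_ne hc hd hdc hdc') hNC hQC⟩

/-- Let `k` be algebraically closed of characteristic `p > 2`, let
`c, d ∈ {0, ..., p-2}` with `d ∉ {c, p-c-2}`.  Then every short exact sequence of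
`sl₂(k)`-modules `0 → V(d) → M → V(c) → 0` splits, i.e. `Ext¹(V(c), V(d)) = 0`.

A representation of `sl₂(k)` is a triple of endomorphisms `E, H, F` satisfying the
commutator relations; the submodule `N ≅ V(d)` and the quotient `M/N ≅ V(c)` are
specified via bases realizing the standard highest weight actions. -/
theorem ext_vanishing_splits
    (k : Type*) [Field k] [IsAlgClosed k] (p : ℕ) (hp : p.Prime) (hp2 : 2 < p)
    [CharP k p]
    (c d : ℕ) (hc : c ≤ p - 2) (hd : d ≤ p - 2) (hdc : d ≠ c)
    (hdc' : d ≠ p - c - 2)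
    (M : Type*) [AddCommGroup M] [Module k M]
    (E H F : Module.End k M)
    (hHE : ⁅H, E⁆ = (2 : k) • E) (hHF : ⁅H, F⁆ = (-2 : k) • F) (hEF : ⁅E, F⁆ = H)
    (N : Submodule k M)
    (hNE : N ≤ N.comap E) (hNH : N ≤ N.comap H) (hNF : N ≤ N.comap F)
    -- `N ≅ V(d)`:
    (w : Fin (d + 1) → M) (hwN : ∀ j, w j ∈ N) (hwli : LinearIndependent k w)
    (hwspan : Submodule.span k (Set.range w) = N)
    (hwH : ∀ j : Fin (d + 1), H (w j) = ((d : k) - 2 * ((j : ℕ) : k)) • w j)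
    (hwE : ∀ j : Fin (d + 1),
      E (w j) = (((j : ℕ) : k) * ((d : k) - ((j : ℕ) : k) + 1)) •
        w ⟨(j : ℕ) - 1, Nat.lt_of_le_of_lt (Nat.sub_le _ _) j.isLt⟩)
    (hwF : ∀ j : Fin (d + 1),
      F (w j) = if h : (j : ℕ) + 1 < d + 1 then w ⟨(j : ℕ) + 1, h⟩ else 0)
    -- `M / N ≅ V(c)`:
    (u : Module.Basis (Fin (c + 1)) k (M ⧸ N))
    (huH : ∀ j : Fin (c + 1),
      Submodule.mapQ N N H hNH (u j) = ((c : k) - 2 * ((j : ℕ) : k)) • u j)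
    (huE : ∀ j : Fin (c + 1),
      Submodule.mapQ N N E hNE (u j) =
        (((j : ℕ) : k) * ((c : k) - ((j : ℕ) : k) + 1)) •
          u ⟨(j : ℕ) - 1, Nat.lt_of_le_of_lt (Nat.sub_le _ _) j.isLt⟩)
    (huF : ∀ j : Fin (c + 1),
      Submodule.mapQ N N F hNF (u j) =
        if h : (j : ℕ) + 1 < c + 1 then u ⟨(j : ℕ) + 1, h⟩ else 0) :
    ∃ N' : Submodule k M,
      (∀ x ∈ N', E x ∈ N') ∧ (∀ x ∈ N', H x ∈ N') ∧ (∀ x ∈ N', F x ∈ N') ∧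
      IsCompl N N' :=
  ext_vanishing_splits_general k p c d hc hd hdc hdc' M E H F hHE hHF hEF N hNE hNH hNF w hwspan hwH
    hwE hwF u huH huE huF
end

section
/- Let k be an algebraically closed field of characteristic p > 2 and n = p. In sl_p(k), let f be the regular nilpotent element acting on the baby Verma basis by f·v_i = v_{i+1} (f·v_{p-1} = 0). There exist two sl_2-triples (e_0, h_0, f) and (e_{p-1}, h_{p-1}, f) in sl_p(k) (coming from the baby Verma modules Z(0) and Z(p-1)) such that e_0 has Jordan type (p-1, 1) and e_{p-1} has Jordan type (p); in particular these two sl_2-triples are not conjugate under SL_p(k). -/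
/-- The regular nilpotent `f` of the baby Verma modules: `f·v_i = v_{i+1}`. -/
def fMat (k : Type*) [Field k] (p : ℕ) : Matrix (Fin p) (Fin p) k :=
  Matrix.of fun r c => if (r : ℕ) = (c : ℕ) + 1 then 1 else 0

/-- The matrix of `e` on the baby Verma module `Z(d)`:
`e·v_i = i(d-i+1) v_{i-1}`. -/
def eMat (k : Type*) [Field k] (p : ℕ) (d : k) : Matrix (Fin p) (Fin p) k :=
  Matrix.of fun r c => if (c : ℕ) = (r : ℕ) + 1 then ((c : ℕ) : k) * (d - ((r : ℕ) : k)) else 0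

/-- The matrix of `h` on the baby Verma module `Z(d)`: `h·v_i = (d-2i) v_i`. -/
def hMat (k : Type*) [Field k] (p : ℕ) (d : k) : Matrix (Fin p) (Fin p) k :=
  Matrix.of fun r c => if r = c then d - 2 * ((r : ℕ) : k) else 0

section helpers
open Matrix Finset
variable {k : Type*} [Field k]

lemma hMat_eq (p : ℕ) (d : k) :
    hMat k p d = Matrix.diagonal fun r : Fin p => d - 2 * ((r : ℕ) : k) := by
  ext r c
  by_cases h : r = c
  · subst h; simp [hMat]
  · simp [hMat, Matrix.diagonal_apply_ne _ h, h]

lemma eMat_pow (p : ℕ) (d : k) (m : ℕ) :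
    (eMat k p d) ^ m = Matrix.of (fun r c : Fin p =>
      if (c : ℕ) = (r : ℕ) + m then
        ∏ j ∈ Finset.range m, ((((r : ℕ) + j + 1 : ℕ)) : k) * (d - (((r : ℕ) + j : ℕ) : k))
      else 0) := by
  induction m with
  | zero =>
    ext r c
    simp only [pow_zero, Matrix.one_apply, Matrix.of_apply, Finset.range_zero, Finset.prod_empty,
      Nat.add_zero]
    by_cases h : r = c
    · subst h; simp
    · rw [if_neg h, if_neg (by simp [Fin.ext_iff] at h ⊢; omega)]
  | succ m ih =>
    ext r c
    rw [pow_succ, ih]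
    simp only [Matrix.mul_apply, Matrix.of_apply, eMat]
    rw [Fin.sum_univ_eq_sum_range (fun j =>
      (if j = (r : ℕ) + m then
        ∏ x ∈ Finset.range m, ((((r : ℕ) + x + 1 : ℕ)) : k) * (d - (((r : ℕ) + x : ℕ) : k))
       else 0) * (if (c : ℕ) = j + 1 then ((c : ℕ) : k) * (d - (j : k)) else 0))]
    rw [Finset.sum_eq_single ((r : ℕ) + m)]
    · rw [if_pos rfl]
      by_cases hc : (c : ℕ) = (r : ℕ) + m + 1
      · rw [if_pos hc, if_pos (by omega), Finset.prod_range_succ, hc]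
      · rw [if_neg hc, if_neg (by omega), mul_zero]
    · intro b _ hb
      rw [if_neg hb, zero_mul]
    · intro hmem
      simp only [Finset.mem_range, not_lt] at hmem
      have hcl := c.isLt
      rw [if_neg (show ¬((c : ℕ) = (r : ℕ) + m + 1) from by omega), mul_zero]

lemma comm_he (p : ℕ) (d : k) :
    hMat k p d * eMat k p d - eMat k p d * hMat k p d = 2 • eMat k p d := by
  rw [hMat_eq]
  ext r c
  simp only [Matrix.sub_apply, Matrix.diagonal_mul, Matrix.mul_diagonal, Matrix.smul_apply,
    eMat, Matrix.of_apply]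
  simp only [nsmul_eq_mul, Nat.cast_ofNat]
  by_cases h : (c : ℕ) = (r : ℕ) + 1
  · simp only [if_pos h]
    have : ((c : ℕ) : k) = ((r : ℕ) : k) + 1 := by rw [h]; push_cast; ring
    rw [this]; ring
  · simp [h]

lemma comm_hf (p : ℕ) (d : k) :
    hMat k p d * fMat k p - fMat k p * hMat k p d = -(2 • fMat k p) := by
  rw [hMat_eq]
  ext r c
  simp only [Matrix.sub_apply, Matrix.diagonal_mul, Matrix.mul_diagonal, Matrix.neg_apply,
    Matrix.smul_apply, fMat, Matrix.of_apply]
  simp only [nsmul_eq_mul, Nat.cast_ofNat]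
  by_cases h : (r : ℕ) = (c : ℕ) + 1
  · simp only [if_pos h]
    have : ((r : ℕ) : k) = ((c : ℕ) : k) + 1 := by rw [h]; push_cast; ring
    rw [this]; ring
  · simp [h]

lemma comm_ef (p : ℕ) (hp2 : 2 < p) [CharP k p] (d : k) :
    eMat k p d * fMat k p - fMat k p * eMat k p d = hMat k p d := by
  have hp0 : (p : k) = 0 := CharP.cast_eq_zero k p
  ext r c
  simp only [Matrix.sub_apply, Matrix.mul_apply, eMat, fMat, hMat, Matrix.of_apply]
  rw [Fin.sum_univ_eq_sum_range (fun j =>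
    (if j = (r : ℕ) + 1 then (j : k) * (d - ((r : ℕ) : k)) else 0) *
    (if j = (c : ℕ) + 1 then (1 : k) else 0))]
  rw [Fin.sum_univ_eq_sum_range (fun j =>
    (if (r : ℕ) = j + 1 then (1 : k) else 0) *
    (if (c : ℕ) = j + 1 then ((c : ℕ) : k) * (d - (j : k)) else 0))]
  rw [show (∑ j ∈ Finset.range p,
      (if j = (r : ℕ) + 1 then (j : k) * (d - ((r : ℕ) : k)) else 0) *
      (if j = (c : ℕ) + 1 then (1 : k) else 0)) =
      ∑ j ∈ Finset.range p,
      (if j = (r : ℕ) + 1 then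
        (if j = (c : ℕ) + 1 then (j : k) * (d - ((r : ℕ) : k)) else 0) else 0) from
    Finset.sum_congr rfl (fun j _ => by split_ifs <;> ring)]
  rw [Finset.sum_ite_eq' (Finset.range p) ((r : ℕ) + 1)
    (fun j => if j = (c : ℕ) + 1 then (j : k) * (d - ((r : ℕ) : k)) else 0)]
  rw [Finset.sum_eq_single ((r : ℕ) - 1)]
  · simp only [Finset.mem_range]
    have hrl := r.isLt
    have hcl := c.isLt
    by_cases hrc : (r : ℕ) = (c : ℕ)
    · have hfin : r = c := Fin.ext hrc
      rw [if_pos hfin]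
      by_cases h0 : (r : ℕ) = 0
      · rw [if_pos (by omega), if_pos (by omega), if_neg (by omega), zero_mul, h0]
        push_cast
        ring
      · by_cases hlast : (r : ℕ) + 1 < p
        · rw [if_pos hlast, if_pos (by omega), if_pos (by omega), if_pos (by omega)]
          have h1 : (((r : ℕ) - 1 : ℕ) : k) = ((r : ℕ) : k) - 1 := by
            have := Nat.cast_sub (R := k) (by omega : 1 ≤ (r : ℕ)); simpa using this
          have h2 : ((c : ℕ) : k) = ((r : ℕ) : k) := by rw [hrc]
          rw [h1, h2]
          push_cast
          ring
        · rw [if_neg hlast, if_pos (by omega), if_pos (by omega)]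
          have hr : (r : ℕ) = p - 1 := by omega
          have hc1 : ((r : ℕ) : k) = -1 := by
            rw [hr, Nat.cast_sub (by omega), hp0]; norm_num
          have hc2 : (((r : ℕ) - 1 : ℕ) : k) = -2 := by
            rw [show (r : ℕ) - 1 = p - 2 by omega, Nat.cast_sub (by omega), hp0]; norm_num
          have h2 : ((c : ℕ) : k) = -1 := by rw [← hrc]; exact hc1
          rw [hc1, hc2, h2]
          ring
    · rw [if_neg (show r ≠ c from fun h => hrc (by rw [h]))]
      split_ifs <;> first | omega | ring
  · intro b _ hb
    rw [if_neg (by omega), zero_mul]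
  · intro hmem
    exact absurd (Finset.mem_range.2 (by have := r.isLt; omega)) hmem

lemma cast_ne_zero_of_lt (p n : ℕ) [CharP k p] (h1 : 0 < n) (h2 : n < p) : (n : k) ≠ 0 := by
  intro h
  have hd := (CharP.cast_eq_zero_iff k p n).1 h
  have := Nat.le_of_dvd h1 hd
  omega

lemma trace_e (p : ℕ) (d : k) : (eMat k p d).trace = 0 := by
  rw [Matrix.trace]
  refine Finset.sum_eq_zero fun r _ => ?_
  simp [Matrix.diag, eMat]

lemma trace_f (p : ℕ) : (fMat k p : Matrix (Fin p) (Fin p) k).trace = 0 := by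
  rw [Matrix.trace]
  refine Finset.sum_eq_zero fun r _ => ?_
  simp [Matrix.diag, fMat]

lemma trace_h (p : ℕ) (hp : p.Prime) (hp2 : 2 < p) [CharP k p] (d : k) :
    (hMat k p d).trace = 0 := by
  rw [hMat_eq, Matrix.trace_diagonal]
  rw [Finset.sum_sub_distrib, ← Finset.mul_sum]
  have h1 : (∑ _r : Fin p, d) = 0 := by
    rw [Finset.sum_const, Finset.card_univ, Fintype.card_fin, nsmul_eq_mul,
      CharP.cast_eq_zero k p, zero_mul]
  have h2 : (∑ r : Fin p, ((r : ℕ) : k)) = 0 := by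
    rw [Fin.sum_univ_eq_sum_range (fun i : ℕ => (i : k)) p, ← Nat.cast_sum]
    rw [CharP.cast_eq_zero_iff k p]
    have hmul : (∑ i ∈ Finset.range p, i) * 2 = p * (p - 1) := Finset.sum_range_id_mul_two p
    have hcop : Nat.Coprime p 2 := (Nat.Prime.coprime_iff_not_dvd hp).2 (fun hdvd => by have := Nat.le_of_dvd (by norm_num) hdvd; omega)
    exact hcop.dvd_of_dvd_mul_right (by rw [hmul]; exact dvd_mul_right p (p - 1))
  rw [h1, h2, mul_zero, sub_zero]

lemma e0_pow_eq_zero (p : ℕ) (hp2 : 2 < p) : (eMat k p 0) ^ (p - 1) = 0 := by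
  rw [eMat_pow]
  ext r c
  simp only [Matrix.of_apply, Matrix.zero_apply]
  by_cases h : (c : ℕ) = (r : ℕ) + (p - 1)
  · rw [if_pos h]
    have hr : (r : ℕ) = 0 := by have := c.isLt; omega
    refine Finset.prod_eq_zero (Finset.mem_range.2 (by omega : 0 < p - 1)) ?_
    simp [hr]
  · rw [if_neg h]

lemma e0_pow_ne_zero (p : ℕ) (hp2 : 2 < p) [CharP k p] : (eMat k p 0) ^ (p - 2) ≠ 0 := by
  intro h
  have h2 := congrArg (fun M : Matrix (Fin p) (Fin p) k => M ⟨1, by omega⟩ ⟨p - 1, by omega⟩) h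
  rw [eMat_pow] at h2
  simp only [Matrix.of_apply, Matrix.zero_apply] at h2
  rw [if_pos (by omega)] at h2
  refine (Finset.prod_ne_zero_iff.2 fun j hj => ?_) h2
  simp only [Finset.mem_range] at hj
  refine mul_ne_zero (cast_ne_zero_of_lt p _ (by omega) (by omega)) ?_
  rw [zero_sub]
  refine neg_ne_zero.2 (cast_ne_zero_of_lt p _ (by omega) (by omega))

lemma e1_pow_eq_zero (p : ℕ) : (eMat k p (-1)) ^ p = 0 := by
  rw [eMat_pow]
  ext r c
  simp only [Matrix.of_apply, Matrix.zero_apply]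
  rw [if_neg (by have := c.isLt; omega)]

lemma e1_pow_ne_zero (p : ℕ) (hp2 : 2 < p) [CharP k p] : (eMat k p (-1)) ^ (p - 1) ≠ 0 := by
  intro h
  have h2 := congrArg (fun M : Matrix (Fin p) (Fin p) k => M ⟨0, by omega⟩ ⟨p - 1, by omega⟩) h
  rw [eMat_pow] at h2
  simp only [Matrix.of_apply, Matrix.zero_apply] at h2
  rw [if_pos (by omega)] at h2
  refine (Finset.prod_ne_zero_iff.2 fun j hj => ?_) h2
  simp only [Finset.mem_range] at hj
  refine mul_ne_zero (cast_ne_zero_of_lt p _ (by omega) (by omega)) ?_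
  have : (-1 : k) - (((0 : ℕ) + j : ℕ) : k) = -((j + 1 : ℕ) : k) := by push_cast; ring
  rw [this]
  exact neg_ne_zero.2 (cast_ne_zero_of_lt p _ (by omega) (by omega))

lemma conj_pow_aux {n : ℕ} {A u v : Matrix (Fin n) (Fin n) k} (huv : u * v = 1)
    (hvu : v * u = 1) (m : ℕ) : (u * A * v) ^ m = u * A ^ m * v := by
  induction m with
  | zero => rw [pow_zero, pow_zero, mul_one, huv]
  | succ m ih =>
    rw [pow_succ, ih, pow_succ]
    simp only [mul_assoc]
    rw [show v * (u * (A * v)) = A * v from by rw [← mul_assoc, hvu, one_mul]]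

lemma e0_mulVec (p : ℕ) (x : Fin p → k) (r : Fin p) :
    ((eMat k p 0).mulVec x) r =
      if h : (r : ℕ) + 1 < p then
        ((((r : ℕ) + 1 : ℕ)) : k) * (0 - ((r : ℕ) : k)) * x ⟨(r : ℕ) + 1, h⟩
      else 0 := by
  rw [Matrix.mulVec, dotProduct]
  by_cases h : (r : ℕ) + 1 < p
  · rw [dif_pos h, Finset.sum_eq_single (⟨(r : ℕ) + 1, h⟩ : Fin p)]
    · simp [eMat]
    · intro b _ hb
      rw [show (eMat k p 0) r b = 0 from by
        simp only [eMat, Matrix.of_apply]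
        rw [if_neg (fun hc => hb (Fin.ext (by simpa using hc)))], zero_mul]
    · intro hmem
      exact absurd (Finset.mem_univ _) hmem
  · rw [dif_neg h]
    refine Finset.sum_eq_zero fun c _ => ?_
    rw [show (eMat k p 0) r c = 0 from by
      simp only [eMat, Matrix.of_apply]
      rw [if_neg (by have := c.isLt; omega)], zero_mul]

lemma rank_e0 (p : ℕ) (hp2 : 2 < p) [CharP k p] : (eMat k p 0).rank = p - 2 := by
  classical
  have hlz : (⟨0, by omega⟩ : Fin p) ≠ ⟨p - 1, by omega⟩ := by
    simp [Fin.ext_iff]; omega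
  let φ : (Fin p → k) →ₗ[k] k × k :=
    LinearMap.prod (LinearMap.proj (⟨0, by omega⟩ : Fin p)) (LinearMap.proj ⟨p - 1, by omega⟩)
  have hφ : ∀ y : Fin p → k, φ y = (y ⟨0, by omega⟩, y ⟨p - 1, by omega⟩) := fun y => rfl
  have hrange : LinearMap.range (eMat k p 0).mulVecLin = LinearMap.ker φ := by
    apply le_antisymm
    · rintro y ⟨x, rfl⟩
      rw [LinearMap.mem_ker, hφ, Prod.mk_eq_zero]
      constructor
      · rw [Matrix.mulVecLin_apply, e0_mulVec, dif_pos (by simp [Fin.val_mk]; omega)]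
        norm_num
      · rw [Matrix.mulVecLin_apply, e0_mulVec, dif_neg (by simp [Fin.val_mk]; omega)]
    · intro y hy
      rw [LinearMap.mem_ker, hφ, Prod.mk_eq_zero] at hy
      obtain ⟨hy0, hyl⟩ := hy
      refine ⟨fun c => if h : 2 ≤ (c : ℕ) then
          y ⟨(c : ℕ) - 1, by omega⟩ /
            (((c : ℕ) : k) * (0 - ((((c : ℕ) - 1 : ℕ)) : k))) else 0, ?_⟩
      funext r
      rw [Matrix.mulVecLin_apply, e0_mulVec]
      by_cases h : (r : ℕ) + 1 < p
      · rw [dif_pos h]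
        simp only [Fin.val_mk]
        by_cases h0 : (r : ℕ) = 0
        · rw [dif_neg (by omega), mul_zero,
            show r = (⟨0, by omega⟩ : Fin p) from Fin.ext (by simp [Fin.val_mk, h0]), hy0]
        · rw [dif_pos (by omega)]
          have hne : (((r : ℕ) + 1 : ℕ) : k) * (0 - (((r : ℕ) : ℕ) : k)) ≠ 0 := by
            refine mul_ne_zero (cast_ne_zero_of_lt p _ (by omega) (by omega)) ?_
            rw [zero_sub]
            exact neg_ne_zero.2 (cast_ne_zero_of_lt p _ (by omega) (by omega))
          simp only [show ((r : ℕ) + 1 - 1 : ℕ) = (r : ℕ) from by omega]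
          rw [show (⟨(r : ℕ), by omega⟩ : Fin p) = r from Fin.ext (by simp [Fin.val_mk])]
          rw [mul_div_cancel₀ _ hne]
      · rw [dif_neg h,
          show r = (⟨p - 1, by omega⟩ : Fin p) from
            Fin.ext (by simp only [Fin.val_mk]; have := r.isLt; omega), hyl]
  have hsurj : Function.Surjective φ := by
    rintro ⟨s, t⟩
    refine ⟨Pi.single (⟨0, by omega⟩ : Fin p) s + Pi.single (⟨p - 1, by omega⟩ : Fin p) t, ?_⟩
    rw [hφ]
    simp [Pi.single_eq_same, Pi.single_eq_of_ne hlz, Pi.single_eq_of_ne (Ne.symm hlz)]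
  have hrk : Module.finrank k (LinearMap.range φ) = 2 := by
    rw [LinearMap.range_eq_top.2 hsurj]
    simp
  have hh := LinearMap.finrank_range_add_finrank_ker φ
  rw [hrk, show Module.finrank k (Fin p → k) = p from by simp] at hh
  rw [Matrix.rank, hrange]
  omega

end helpers

/-- Let `k` be algebraically closed of characteristic `p > 2` and work
in `sl_p(k)`.  With `f` the regular nilpotent acting by `f·v_i = v_{i+1}`, the baby
Verma modules `Z(0)` and `Z(p-1)` give two `sl₂`-triples `(e₀, h₀, f)` and
`(e_{p-1}, h_{p-1}, f)` in `sl_p(k)` such that `e₀` has Jordan type `(p-1, 1)` and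
`e_{p-1}` has Jordan type `(p)`; in particular the two triples are not conjugate
under `SL_p(k)`. -/
theorem two_nonconjugate_sl2_triples_in_slp
    (k : Type*) [Field k] [IsAlgClosed k] (p : ℕ) (hp : p.Prime) (hp2 : 2 < p)
    [CharP k p] :
    -- all six matrices have trace zero, i.e. lie in `sl_p(k)`:
    (eMat k p 0).trace = 0 ∧ (hMat k p 0).trace = 0 ∧
    (eMat k p ((p : k) - 1)).trace = 0 ∧ (hMat k p ((p : k) - 1)).trace = 0 ∧
    (fMat k p).trace = 0 ∧
    -- `(e₀, h₀, f)` is an `sl₂`-triple: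
    (hMat k p 0 * eMat k p 0 - eMat k p 0 * hMat k p 0 = 2 • eMat k p 0) ∧
    (hMat k p 0 * fMat k p - fMat k p * hMat k p 0 = -(2 • fMat k p)) ∧
    (eMat k p 0 * fMat k p - fMat k p * eMat k p 0 = hMat k p 0) ∧
    -- `(e_{p-1}, h_{p-1}, f)` is an `sl₂`-triple:
    (hMat k p ((p : k) - 1) * eMat k p ((p : k) - 1) -
        eMat k p ((p : k) - 1) * hMat k p ((p : k) - 1) = 2 • eMat k p ((p : k) - 1)) ∧
    (hMat k p ((p : k) - 1) * fMat k p - fMat k p * hMat k p ((p : k) - 1) =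
        -(2 • fMat k p)) ∧
    (eMat k p ((p : k) - 1) * fMat k p - fMat k p * eMat k p ((p : k) - 1) =
        hMat k p ((p : k) - 1)) ∧
    -- `e₀` has Jordan type `(p-1, 1)`:
    (eMat k p 0) ^ (p - 1) = 0 ∧ (eMat k p 0) ^ (p - 2) ≠ 0 ∧
    (eMat k p 0).rank = p - 2 ∧
    -- `e_{p-1}` has Jordan type `(p)`:
    (eMat k p ((p : k) - 1)) ^ p = 0 ∧ (eMat k p ((p : k) - 1)) ^ (p - 1) ≠ 0 ∧
    -- the two `sl₂`-triples are not conjugate under `SL_p(k)`: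
    ¬ ∃ g : Matrix.SpecialLinearGroup (Fin p) k,
        (g : Matrix (Fin p) (Fin p) k) * eMat k p 0 * ((g⁻¹ : Matrix.SpecialLinearGroup (Fin p) k) : Matrix (Fin p) (Fin p) k) = eMat k p ((p : k) - 1) ∧
        (g : Matrix (Fin p) (Fin p) k) * hMat k p 0 * ((g⁻¹ : Matrix.SpecialLinearGroup (Fin p) k) : Matrix (Fin p) (Fin p) k) = hMat k p ((p : k) - 1) ∧
        (g : Matrix (Fin p) (Fin p) k) * fMat k p * ((g⁻¹ : Matrix.SpecialLinearGroup (Fin p) k) : Matrix (Fin p) (Fin p) k) = fMat k p := by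
  have hd : ((p : k) - 1) = -1 := by simp [CharP.cast_eq_zero k p]
  rw [hd]
  refine ⟨trace_e p 0, trace_h p hp hp2 0, trace_e p (-1), trace_h p hp hp2 (-1), trace_f p,
    comm_he p 0, comm_hf p 0, comm_ef p hp2 0,
    comm_he p (-1), comm_hf p (-1), comm_ef p hp2 (-1),
    e0_pow_eq_zero p hp2, e0_pow_ne_zero p hp2, rank_e0 p hp2,
    e1_pow_eq_zero p, e1_pow_ne_zero p hp2, ?_⟩
  rintro ⟨g, hge, -, -⟩
  have huv : (g : Matrix (Fin p) (Fin p) k) * ((g⁻¹ : Matrix.SpecialLinearGroup (Fin p) k) : Matrix (Fin p) (Fin p) k) = 1 := by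
    rw [← Matrix.SpecialLinearGroup.coe_mul]
    simp
  have hvu : ((g⁻¹ : Matrix.SpecialLinearGroup (Fin p) k) : Matrix (Fin p) (Fin p) k) * (g : Matrix (Fin p) (Fin p) k) = 1 := by
    rw [← Matrix.SpecialLinearGroup.coe_mul]
    simp
  have h0 : (eMat k p (-1)) ^ (p - 1) = 0 := by
    rw [← hge, conj_pow_aux huv hvu, e0_pow_eq_zero p hp2, mul_zero, zero_mul]
  exact e1_pow_ne_zero p hp2 h0
end
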